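/- Let I be an infinite set, U an ultrafilter on I, and ⟨n_i : i ∈ I⟩ a family of finite nonempty sets, and let A = ∏_{i∈I} n_i / U. Let ĥ be a 1-dimensional choice function on A with induced ultratopology C on A. Then the set R = { a_{i,m} : ⟨i,m⟩ ∈ G } is dense in C, where G = { ⟨i,m⟩ : i ∈ I, m ∈ n_i, and (∃ a ∈ A) â(i) = m } and, for each ⟨i,m⟩ ∈ G, a_{i,m} ∈ A is some fixed element with â_{i,m}(i) = m. In particular, there is a dense subset D of A with |D| ≤ |I|. -/

import Mathlib

open Set

/-- The setoid on the product `∀ i, A i` identifying functions that agree on a set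
in the ultrafilter `U`; its quotient is the ultraproduct `∏ A i / U`. -/
def upSetoid {I : Type*} (U : Ultrafilter I) (A : I → Type*) : Setoid (∀ i, A i) where
  r f g := {i | f i = g i} ∈ U
  iseqv := by
    refine ⟨fun f => ?_, fun {f g} h => ?_, fun {f g h} hfg hgh => ?_⟩
    · exact Filter.univ_mem' fun i => rfl
    · exact Filter.mem_of_superset h fun i hi => (hi : f i = g i).symm
    · exact Filter.mem_of_superset (Filter.inter_mem hfg hgh) fun i hi =>
        (hi.1 : f i = g i).trans hi.2

/-- Given a "hat" map `c` assigning to each point of `Y` a representative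
in `∀ i, X i`, the set `T(R, a) = { i ∈ I : ∃ b ∈ R, b̂(i) = â(i) }`. -/
def tset {I : Type*} {X : I → Type*} {Y : Type*} (c : Y → ∀ i, X i)
    (R : Set Y) (a : Y) : Set I :=
  {i | ∃ b ∈ R, c b i = c a i}

/-- The ultratopology induced by the hat map `c`: closed sets are exactly the
`R` such that `T(R,a) ∈ U` implies `a ∈ R`. -/
def ultraTop {I : Type*} (U : Ultrafilter I) {X : I → Type*} {Y : Type*}
    (c : Y → ∀ i, X i) : TopologicalSpace Y :=
  TopologicalSpace.ofClosed {R | ∀ a, tset c R a ∈ U → a ∈ R}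
    (by
      intro a ha
      have h : tset c (∅ : Set Y) a = ∅ := by ext i; simp [tset]
      rw [h] at ha
      exact absurd ha (Filter.empty_notMem _))
    (by
      intro S hS a ha
      exact Set.mem_sInter.2 fun R hR => hS hR a
        (Filter.mem_of_superset ha fun i hi => by
          obtain ⟨b, hb, he⟩ := hi
          exact ⟨b, hb R hR, he⟩))
    (by
      intro R hR S hS a ha
      have h : tset c (R ∪ S) a = tset c R a ∪ tset c S a := by
        ext i; simp [tset, Set.mem_union, or_and_right, exists_or]
      rw [h] at ha
      rcases (Ultrafilter.union_mem_iff.1 ha) with h' | h'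
      · exact Or.inl (hR a h')
      · exact Or.inr (hS a h'))

/-!
Every value `â(i)` is attained at `i` by the chosen `a_{i,â(i)} ∈ R`, so `T(R, a) = I ∈ U` for
every `a`. As `T(R, a) ⊆ T(cl R, a)` and `cl R` is closed, every `a` lies in `cl R`. The set `R`
is indexed by `Σ i, n i`, of size at most `|I| · ℵ₀ = |I|`.
-/

open Topology

section UltraTopology

variable {I : Type*} {X : I → Type*} {Y : Type*} (U : Ultrafilter I) (c : Y → ∀ i, X i)

theorem isClosed_ultraTop_iff {R : Set Y} :
    IsClosed[ultraTop U c] R ↔ ∀ a, tset c R a ∈ U → a ∈ R :=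
  ⟨fun h => compl_compl R ▸ h.isOpen_compl,
    fun h => @IsClosed.mk _ (ultraTop U c) R <|
      show Rᶜᶜ ∈ {R | ∀ a, tset c R a ∈ U → a ∈ R} from (compl_compl R).symm ▸ h⟩

theorem tset_mono {R S : Set Y} (h : R ⊆ S) (a : Y) : tset c R a ⊆ tset c S a :=
  fun _ ⟨b, hb, he⟩ => ⟨b, h hb, he⟩

theorem mem_closure_of_tset_mem {R : Set Y} {a : Y} (ha : tset c R a ∈ U) :
    a ∈ closure[ultraTop U c] R :=
  (isClosed_ultraTop_iff U c).1 (@isClosed_closure _ (ultraTop U c) R) a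
    (Filter.mem_of_superset ha (tset_mono c (@subset_closure _ (ultraTop U c) R) a))

theorem dense_ultraTop_of_tset_mem {R : Set Y} (h : ∀ a, tset c R a ∈ U) :
    @Dense _ (ultraTop U c) R :=
  fun a => mem_closure_of_tset_mem U c (h a)

variable {c}

theorem tset_image_sel_eq_univ (sel : (Σ i, X i) → Y)
    (hsel : ∀ p : Σ i, X i, (∃ a, c a p.1 = p.2) → c (sel p) p.1 = p.2) (a : Y) :
    tset c (sel '' {p | ∃ a, c a p.1 = p.2}) a = univ :=
  eq_univ_of_forall fun i => ⟨sel ⟨i, c a i⟩, mem_image_of_mem _ ⟨a, rfl⟩, hsel ⟨i, c a i⟩ ⟨a, rfl⟩⟩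

end UltraTopology

open Cardinal

theorem Cardinal.mk_sigma_le_of_finite {I : Type u} [Infinite I] (n : I → Type u)
    [∀ i, Finite (n i)] : #(Σ i, n i) ≤ #I :=
  calc #(Σ i, n i) = sum fun i => #(n i) := mk_sigma n
    _ ≤ sum fun _ : I => ℵ₀ := sum_le_sum _ _ fun i => (lt_aleph0_of_finite (n i)).le
    _ = #I * ℵ₀ := sum_const' _ _
    _ = #I := mul_aleph0_eq (aleph0_le_mk I)

theorem dense_set_from_choice_function_general {I : Type u} [Infinite I] (U : Ultrafilter I)
    (n : I → Type u) [∀ i, Finite (n i)]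
    (c : Quotient (upSetoid U n) → ∀ i, n i)
    (sel : (Σ i, n i) → Quotient (upSetoid U n))
    (hsel : ∀ p : Σ i, n i, (∃ a, c a p.1 = p.2) → c (sel p) p.1 = p.2) :
    @Dense _ (ultraTop U c) (sel '' {p : Σ i, n i | ∃ a, c a p.1 = p.2}) ∧
    ∃ D : Set (Quotient (upSetoid U n)),
      @Dense _ (ultraTop U c) D ∧ Cardinal.mk D ≤ Cardinal.mk I := by
  have hdense := dense_ultraTop_of_tset_mem U c fun a => by
    rw [tset_image_sel_eq_univ sel hsel a]
    exact Filter.univ_mem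
  refine ⟨hdense, _, hdense, ?_⟩
  calc #(sel '' {p : Σ i, n i | ∃ a, c a p.1 = p.2})
      ≤ #(Σ i, n i) := mk_image_le.trans (mk_set_le _)
    _ ≤ #I := mk_sigma_le_of_finite n

/-- Let `A = ∏ᵢ nᵢ / U` be an ultraproduct of finite nonempty
sets over an infinite index set, with a 1-dimensional choice function `c`.
Let `G = { ⟨i,m⟩ : ∃ a ∈ A, â(i) = m }` and for each `⟨i,m⟩ ∈ G` fix
`a_{i,m} = sel ⟨i,m⟩ ∈ A` with `â_{i,m}(i) = m`. Then `R = sel '' G` is dense in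
the induced ultratopology; in particular there is a dense set `D` with `|D| ≤ |I|`. -/
theorem dense_set_from_choice_function {I : Type u} [Infinite I] (U : Ultrafilter I)
    (n : I → Type u) [∀ i, Finite (n i)] [∀ i, Nonempty (n i)]
    (c : Quotient (upSetoid U n) → ∀ i, n i)
    (hc : ∀ a, Quotient.mk (upSetoid U n) (c a) = a)
    (sel : (Σ i, n i) → Quotient (upSetoid U n))
    (hsel : ∀ p : Σ i, n i, (∃ a, c a p.1 = p.2) → c (sel p) p.1 = p.2) :
    @Dense _ (ultraTop U c) (sel '' {p : Σ i, n i | ∃ a, c a p.1 = p.2}) ∧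
    ∃ D : Set (Quotient (upSetoid U n)),
      @Dense _ (ultraTop U c) D ∧ Cardinal.mk D ≤ Cardinal.mk I :=
  dense_set_from_choice_function_general U n c sel hsel
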